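/- arXiv:1909.03695 — 3 statements merged into one kernel-verified Lean document; each statement's English description precedes it below -/
import Mathlib

section
/- Let h : ℝ → ℝ be (2r+2)-times continuously differentiable on [0, π] with h^{(2i+1)}(0) + h^{(2i+1)}(π) = 0 for all i = 0, 1, …, r. Then for every natural number k, ∫₀^π h(x)·cos((2k+1)x) dx = ((-1)^{r+1}/(2k+1)^{2r+2})·∫₀^π h^{(2r+2)}(x)·cos((2k+1)x) dx. -/
open intervalIntegral Real

private lemma hasDerivAt_sin_div (c : ℝ) (hc : c ≠ 0) (x : ℝ) :
    HasDerivAt (fun y => Real.sin (c * y) / c) (Real.cos (c * x)) x := by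
  have h1 := ((Real.hasDerivAt_sin (c * x)).comp x ((hasDerivAt_id x).const_mul c)).div_const c
  exact h1.congr_deriv (by field_simp)

private lemma hasDerivAt_neg_cos_div (c : ℝ) (hc : c ≠ 0) (x : ℝ) :
    HasDerivAt (fun y => -Real.cos (c * y) / c) (Real.sin (c * x)) x := by
  have h1 := (((Real.hasDerivAt_cos (c * x)).comp x ((hasDerivAt_id x).const_mul c)).neg).div_const c
  exact h1.congr_deriv (by field_simp)

private lemma step (c : ℝ) (hc : c ≠ 0) (hsin : Real.sin (c * Real.pi) = 0)
    (hcos : Real.cos (c * Real.pi) = -1) (g : ℝ → ℝ) (hg : ContDiff ℝ 2 g)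
    (hbc : deriv g 0 + deriv g Real.pi = 0) :
    ∫ x in (0:ℝ)..Real.pi, g x * Real.cos (c * x) =
      -(1 / c ^ 2) * ∫ x in (0:ℝ)..Real.pi, deriv (deriv g) x * Real.cos (c * x) := by
  have hg1 : ContDiff ℝ 1 (deriv g) := by
    have h2 : ContDiff ℝ ((1 : ℕ) + 1) g := by exact_mod_cast hg
    exact_mod_cast (contDiff_succ_iff_deriv.mp h2).2.2
  have hgd : Differentiable ℝ g := hg.differentiable (by norm_num)
  have hgd1 : Differentiable ℝ (deriv g) := hg1.differentiable (by norm_num)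
  have hcont1 : Continuous (deriv g) := hgd1.continuous
  have hcont2 : Continuous (deriv (deriv g)) := hg1.continuous_deriv (le_refl _)
  have e1 : ∫ x in (0:ℝ)..Real.pi, deriv g x * (Real.sin (c * x) / c) =
      (1 / c) * ∫ x in (0:ℝ)..Real.pi, deriv g x * Real.sin (c * x) := by
    rw [← intervalIntegral.integral_const_mul]
    congr 1; ext x; ring
  have e2 : ∫ x in (0:ℝ)..Real.pi, deriv (deriv g) x * (-Real.cos (c * x) / c) =
      -(1 / c) * ∫ x in (0:ℝ)..Real.pi, deriv (deriv g) x * Real.cos (c * x) := by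
    rw [← intervalIntegral.integral_const_mul]
    congr 1; ext x; ring
  have h1 : ∫ x in (0:ℝ)..Real.pi, g x * Real.cos (c * x) =
      -(1/c) * ∫ x in (0:ℝ)..Real.pi, deriv g x * Real.sin (c * x) := by
    have hI := integral_mul_deriv_eq_deriv_mul (u := g) (u' := deriv g)
      (v := fun y => Real.sin (c * y) / c) (v' := fun y => Real.cos (c * y))
      (a := 0) (b := Real.pi)
      (fun x _ => (hgd x).hasDerivAt)
      (fun x _ => hasDerivAt_sin_div c hc x)
      (hcont1.intervalIntegrable _ _)
      ((Real.continuous_cos.comp (continuous_const.mul continuous_id)).intervalIntegrable _ _)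
    rw [hI, hsin]
    simp only [mul_zero, zero_div, Real.sin_zero, sub_zero, zero_sub]
    rw [e1]; ring
  have h2 : ∫ x in (0:ℝ)..Real.pi, deriv g x * Real.sin (c * x) =
      (1/c) * ∫ x in (0:ℝ)..Real.pi, deriv (deriv g) x * Real.cos (c * x) := by
    have hI := integral_mul_deriv_eq_deriv_mul (u := deriv g) (u' := deriv (deriv g))
      (v := fun y => -Real.cos (c * y) / c) (v' := fun y => Real.sin (c * y))
      (a := 0) (b := Real.pi)
      (fun x _ => (hgd1 x).hasDerivAt)
      (fun x _ => hasDerivAt_neg_cos_div c hc x)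
      (hcont2.intervalIntegrable _ _)
      ((Real.continuous_sin.comp (continuous_const.mul continuous_id)).intervalIntegrable _ _)
    rw [hI, hcos]
    have hπ : deriv g Real.pi = -deriv g 0 := by linarith
    simp only [mul_zero, Real.cos_zero, hπ, e2]
    ring
  rw [h1, h2]
  ring

theorem stmt_1 (r : ℕ) (hr : 1 ≤ r) (h : ℝ → ℝ) (hh : ContDiff ℝ (2 * r + 2) h)
    (hbc : ∀ i ≤ r, iteratedDeriv (2 * i + 1) h 0 + iteratedDeriv (2 * i + 1) h Real.pi = 0)
    (k : ℕ) :
    ∫ x in (0:ℝ)..Real.pi, h x * Real.cos ((2 * k + 1) * x) =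
      ((-1 : ℝ) ^ (r + 1) / (2 * (k:ℝ) + 1) ^ (2 * r + 2)) *
        ∫ x in (0:ℝ)..Real.pi, iteratedDeriv (2 * r + 2) h x * Real.cos ((2 * k + 1) * x) := by
  set c : ℝ := 2 * (k:ℝ) + 1 with hcdef
  have hc : c ≠ 0 := by positivity
  have hsin : Real.sin (c * Real.pi) = 0 := by
    have h0 := Real.sin_nat_mul_pi (2 * k + 1)
    rw [hcdef]; push_cast at h0 ⊢; convert h0 using 2
  have hcos : Real.cos (c * Real.pi) = -1 := by
    have h0 : c * Real.pi = Real.pi + (k:ℝ) * (2 * Real.pi) := by rw [hcdef]; ring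
    rw [h0, Real.cos_add_nat_mul_two_pi, Real.cos_pi]
  have key : ∀ i ≤ r + 1, ∫ x in (0:ℝ)..Real.pi, h x * Real.cos (c * x) =
      ((-1 : ℝ) ^ i / c ^ (2 * i)) *
        ∫ x in (0:ℝ)..Real.pi, iteratedDeriv (2 * i) h x * Real.cos (c * x) := by
    intro i hi
    induction i with
    | zero => simp [iteratedDeriv_zero]
    | succ n ih =>
      have hn : n ≤ r := Nat.lt_succ_iff.mp hi
      have hcd2 : ContDiff ℝ 2 (deriv^[2 * n] h) := by
        apply ContDiff.iterate_deriv' 2 (2 * n)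
        apply hh.of_le
        have hle : (2 + 2 * n : ℕ) ≤ (2 * r + 2 : ℕ) := by omega
        exact_mod_cast hle
      have hbcn : deriv (deriv^[2 * n] h) 0 + deriv (deriv^[2 * n] h) Real.pi = 0 := by
        have hb := hbc n hn
        rw [iteratedDeriv_succ, iteratedDeriv_eq_iterate] at hb
        exact hb
      have hstep := step c hc hsin hcos (deriv^[2 * n] h) hcd2 hbcn
      rw [ih (by omega), iteratedDeriv_eq_iterate, hstep]
      have h2 : deriv (deriv (deriv^[2 * n] h)) = iteratedDeriv (2 * (n + 1)) h := by
        have he : 2 * (n + 1) = (2 * n + 1) + 1 := by ring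
        rw [he, iteratedDeriv_succ, iteratedDeriv_succ, iteratedDeriv_eq_iterate]
      rw [h2, ← mul_assoc]
      congr 1
      rw [pow_succ]
      have he2 : 2 * (n + 1) = 2 * n + 2 := by ring
      rw [he2, pow_add]
      field_simp
      ring
  have hk := key (r + 1) (le_refl _)
  have he : 2 * (r + 1) = 2 * r + 2 := by ring
  rw [he] at hk
  convert hk using 2 <;> push_cast <;> ring_nf
end

section
/- Let γ_j ~ a·j^α as j → ∞ with a > 0, α > 0, and let μ be the nondecreasing enumeration of the multiset {(k + 1/2)^{2r} + γ_j : k ∈ ℕ, j ≥ 1}. Then the counting function N(t) = #{(k,j) : (k+1/2)^{2r} + γ_j ≤ t} satisfies N(t) ~ C·t^{1/(2r) + 1/α} as t → ∞ for some constant C > 0. -/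
open Filter Set MeasureTheory intervalIntegral

section aux
variable (α p : ℝ)

private lemma aux_cont (c d : ℝ) (hα : 0 < α) (hp : 0 < p) :
    Continuous (fun u : ℝ => (max (c - d * u ^ α) 0) ^ p) := by
  have h1 : Continuous (fun u : ℝ => u ^ α) := by
    rw [continuous_iff_continuousAt]
    intro x
    exact Real.continuousAt_rpow_const x α (Or.inr hα.le)
  have h2 : Continuous (fun u : ℝ => max (c - d * u ^ α) 0) :=
    (continuous_const.sub (continuous_const.mul h1)).max continuous_const
  rw [continuous_iff_continuousAt]
  intro x
  exact (Real.continuousAt_rpow_const _ p (Or.inr hp.le)).comp h2.continuousAt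

private lemma aux_anti (c d : ℝ) (hα : 0 < α) (hp : 0 ≤ p) (hd : 0 ≤ d) :
    AntitoneOn (fun y : ℝ => (max (c - d * y ^ α) 0) ^ p) (Set.Ici 0) := by
  intro y1 h1 y2 h2 h12
  simp only [Set.mem_Ici] at h1 h2
  have h3 : y1 ^ α ≤ y2 ^ α := Real.rpow_le_rpow h1 h12 hα.le
  have h4 : max (c - d * y2 ^ α) 0 ≤ max (c - d * y1 ^ α) 0 :=
    max_le_max (by nlinarith) le_rfl
  exact Real.rpow_le_rpow (le_max_right _ _) h4 hp

private lemma aux_vanish (b t y : ℝ) (hα : 0 < α) (hp : 0 < p) (hb : 0 < b) (ht : 0 < t)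
    (hy : (t/b)^(1/α) ≤ y) : (max (t - b * y ^ α) 0) ^ p = 0 := by
  have hY : 0 < (t/b)^(1/α) := Real.rpow_pos_of_pos (div_pos ht hb) _
  have h1 : ((t/b)^(1/α)) ^ α ≤ y ^ α := Real.rpow_le_rpow hY.le hy hα.le
  have h2 : ((t/b)^(1/α)) ^ α = t / b := by
    rw [← Real.rpow_mul (div_pos ht hb).le, one_div, inv_mul_cancel₀ hα.ne', Real.rpow_one]
  rw [h2] at h1
  have h3 : t - b * y ^ α ≤ 0 := by
    have := (div_le_iff₀ hb).mp h1
    nlinarith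
  rw [max_eq_right h3, Real.zero_rpow hp.ne']

private lemma aux_int (b t : ℝ) (hα : 0 < α) (hp : 0 < p) (hb : 0 < b) (ht : 0 < t) :
    ∫ y in (0:ℝ)..(t/b)^(1/α), (max (t - b * y ^ α) 0) ^ p
      = (t/b)^(1/α) * t ^ p * ∫ u in (0:ℝ)..1, (max (1 - u ^ α) 0) ^ p := by
  set Y : ℝ := (t/b)^(1/α) with hYdef
  have hY : 0 < Y := Real.rpow_pos_of_pos (div_pos ht hb) _
  have hbY : b * Y ^ α = t := by
    rw [hYdef, ← Real.rpow_mul (div_pos ht hb).le, one_div, inv_mul_cancel₀ hα.ne',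
      Real.rpow_one, mul_div_cancel₀ _ hb.ne']
  have key := integral_comp_mul_right (a := 0) (b := 1)
    (fun y => (max (t - b * y ^ α) 0) ^ p) hY.ne'
  simp only [zero_mul, one_mul, smul_eq_mul] at key
  have h2 : (∫ x in (0:ℝ)..1, (max (t - b * (x * Y) ^ α) 0) ^ p)
      = t ^ p * ∫ u in (0:ℝ)..1, (max (1 - u ^ α) 0) ^ p := by
    rw [← intervalIntegral.integral_const_mul]
    apply integral_congr
    intro x hx
    rw [uIcc_of_le zero_le_one] at hx
    have hx0 : (0:ℝ) ≤ x := hx.1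
    show (max (t - b * (x * Y) ^ α) 0) ^ p = t ^ p * (max (1 - x ^ α) 0) ^ p
    have h3 : (x * Y) ^ α = x ^ α * Y ^ α := Real.mul_rpow hx0 hY.le
    rw [h3]
    have h4 : t - b * (x ^ α * Y ^ α) = t * (1 - x ^ α) := by
      have : b * (x ^ α * Y ^ α) = t * x ^ α := by rw [mul_comm (x^α), ← mul_assoc, hbY]
      rw [this]; ring
    rw [h4, ← mul_zero t, ← mul_max_of_nonneg _ _ ht.le,
      Real.mul_rpow ht.le (le_max_right _ _), mul_zero]
  rw [h2] at key
  field_simp at key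
  linarith [key]

private lemma aux_Ipos (hα : 0 < α) (hp : 0 < p) :
    0 < ∫ u in (0:ℝ)..1, (max (1 - u ^ α) 0) ^ p := by
  apply intervalIntegral_pos_of_pos_on ((aux_cont α p 1 1 hα hp).intervalIntegrable 0 1 |>.congr ?_)
  · intro x hx
    have h1 : x ^ α < 1 := Real.rpow_lt_one hx.1.le hx.2 hα
    have h2 : max (1 - x ^ α) 0 = 1 - x ^ α := max_eq_left (by linarith)
    rw [h2]
    exact Real.rpow_pos_of_pos (by linarith) p
  · norm_num
  · intro x _; simp

private lemma aux_sum_upper (b t : ℝ) (hα : 0 < α) (hp : 0 < p) (hb : 0 < b) (ht : 0 < t)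
    (n : ℕ) :
    ∑ j ∈ Finset.range n, (max (t - b * (j:ℝ) ^ α) 0) ^ p
      ≤ t ^ p + (t/b)^(1/α) * t ^ p * ∫ u in (0:ℝ)..1, (max (1 - u ^ α) 0) ^ p := by
  set f : ℝ → ℝ := fun y => (max (t - b * y ^ α) 0) ^ p with hfdef
  have hf0 : ∀ y, 0 ≤ f y := fun y => Real.rpow_nonneg (le_max_right _ _) _
  set Y : ℝ := (t/b)^(1/α) with hYdef
  have hY : 0 < Y := Real.rpow_pos_of_pos (div_pos ht hb) _
  have hint : 0 ≤ ∫ y in (0:ℝ)..Y, f y :=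
    integral_nonneg hY.le (fun x _ => hf0 x)
  have hIeq := aux_int α p b t hα hp hb ht
  have hfz : f 0 = t ^ p := by
    rw [hfdef]
    simp only [Real.zero_rpow hα.ne', mul_zero, sub_zero, max_eq_left ht.le]
  rcases n with _ | m
  · simp only [Finset.range_zero, Finset.sum_empty]
    rw [← hIeq]
    positivity
  · have hcont : Continuous f := aux_cont α p t b hα hp
    have hanti : AntitoneOn f (Set.Icc (0:ℝ) (0 + m)) := by
      apply (aux_anti α p t b hα hp.le hb.le).mono
      intro x hx
      exact hx.1
    have hsum : (∑ i ∈ Finset.range m, f ((0:ℝ) + ((i:ℕ) + 1 : ℕ))) ≤ ∫ x in (0:ℝ)..(0 + m : ℝ), f x :=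
      hanti.sum_le_integral
    have hcast : ∀ i : ℕ, f ((0:ℝ) + ((i:ℕ) + 1 : ℕ)) = f ((i:ℝ) + 1) := by
      intro i; push_cast; ring_nf
    rw [Finset.sum_congr rfl (fun i _ => hcast i)] at hsum
    rw [zero_add] at hsum
    -- ∫_0^m f ≤ ∫_0^Y f
    set B : ℝ := max (m:ℝ) Y with hBdef
    have hmB : (m:ℝ) ≤ B := le_max_left _ _
    have hYB : Y ≤ B := le_max_right _ _
    have hintAll : ∀ u v : ℝ, IntervalIntegrable f volume u v := fun u v =>
      hcont.intervalIntegrable u v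
    have hsplit1 : ∫ x in (0:ℝ)..B, f x = (∫ x in (0:ℝ)..(m:ℝ), f x) + ∫ x in (m:ℝ)..B, f x :=
      (integral_add_adjacent_intervals (hintAll 0 m) (hintAll m B)).symm
    have hsplit2 : ∫ x in (0:ℝ)..B, f x = (∫ x in (0:ℝ)..Y, f x) + ∫ x in Y..B, f x :=
      (integral_add_adjacent_intervals (hintAll 0 Y) (hintAll Y B)).symm
    have hz : ∫ x in Y..B, f x = 0 := by
      rw [← intervalIntegral.integral_zero (a := Y) (b := B) (μ := volume) (E := ℝ)]
      apply integral_congr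
      intro x hx
      rw [uIcc_of_le hYB] at hx
      exact aux_vanish α p b t x hα hp hb ht hx.1
    have hpos2 : 0 ≤ ∫ x in (m:ℝ)..B, f x := integral_nonneg hmB (fun x _ => hf0 x)
    have hle : (∫ x in (0:ℝ)..(m:ℝ), f x) ≤ ∫ x in (0:ℝ)..Y, f x := by
      rw [hsplit2, hz, add_zero] at hsplit1
      linarith
    rw [Finset.sum_range_succ']
    have goal1 : (∑ i ∈ Finset.range m, f ((((i:ℕ)+1 : ℕ)) : ℝ)) + f (((0:ℕ)):ℝ)
        ≤ t ^ p + Y * t ^ p * ∫ u in (0:ℝ)..1, (max (1 - u ^ α) 0) ^ p := by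
      have hsum' : (∑ i ∈ Finset.range m, f ((((i:ℕ)+1 : ℕ)) : ℝ)) ≤ ∫ x in (0:ℝ)..(m:ℝ), f x := by
        calc (∑ i ∈ Finset.range m, f ((((i:ℕ)+1 : ℕ)) : ℝ))
            = ∑ i ∈ Finset.range m, f ((i:ℝ) + 1) := by
              apply Finset.sum_congr rfl; intro i _; push_cast; ring_nf
          _ ≤ ∫ x in (0:ℝ)..(m:ℝ), f x := by
              convert hsum using 2 <;> push_cast <;> ring
      have hfz0 : f (((0:ℕ)):ℝ) = t ^ p := by rw [Nat.cast_zero, hfz]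
      rw [hfz0, hIeq] at *
      linarith [hle, hsum']
    exact goal1

private lemma aux_sum_lower (b t : ℝ) (hα : 0 < α) (hp : 0 < p) (hb : 0 < b) (ht : 0 < t)
    (n : ℕ) (hn : (t/b)^(1/α) ≤ (n:ℝ)) :
    (t/b)^(1/α) * t ^ p * (∫ u in (0:ℝ)..1, (max (1 - u ^ α) 0) ^ p)
      ≤ ∑ j ∈ Finset.range n, (max (t - b * (j:ℝ) ^ α) 0) ^ p := by
  set f : ℝ → ℝ := fun y => (max (t - b * y ^ α) 0) ^ p with hfdef
  have hf0 : ∀ y, 0 ≤ f y := fun y => Real.rpow_nonneg (le_max_right _ _) _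
  set Y : ℝ := (t/b)^(1/α) with hYdef
  have hY : 0 < Y := Real.rpow_pos_of_pos (div_pos ht hb) _
  have hcont : Continuous f := aux_cont α p t b hα hp
  have hanti : AntitoneOn f (Set.Icc (0:ℝ) (0 + n)) := by
    apply (aux_anti α p t b hα hp.le hb.le).mono
    intro x hx
    exact hx.1
  have hsum : (∫ x in (0:ℝ)..(0 + n : ℝ), f x) ≤ ∑ i ∈ Finset.range n, f ((0:ℝ) + i) :=
    hanti.integral_le_sum
  have hsplit : ∫ x in (0:ℝ)..(n:ℝ), f x = (∫ x in (0:ℝ)..Y, f x) + ∫ x in Y..(n:ℝ), f x :=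
    (intervalIntegral.integral_add_adjacent_intervals (hcont.intervalIntegrable 0 Y)
      (hcont.intervalIntegrable Y n)).symm
  have hpos : 0 ≤ ∫ x in Y..(n:ℝ), f x := intervalIntegral.integral_nonneg hn (fun x _ => hf0 x)
  have hIeq := aux_int α p b t hα hp hb ht
  rw [zero_add] at hsum
  calc Y * t ^ p * (∫ u in (0:ℝ)..1, (max (1 - u ^ α) 0) ^ p)
      = ∫ x in (0:ℝ)..Y, f x := hIeq.symm
    _ ≤ ∫ x in (0:ℝ)..(n:ℝ), f x := by rw [hsplit]; linarith
    _ ≤ ∑ i ∈ Finset.range n, f ((0:ℝ) + i) := hsum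
    _ = ∑ j ∈ Finset.range n, f (j:ℝ) := by
        apply Finset.sum_congr rfl; intro i _; rw [zero_add]
end aux

set_option maxHeartbeats 1000000 in
theorem stmt_10 (r : ℕ) (hr : 1 ≤ r) (a α : ℝ) (ha : 0 < a) (hα : 0 < α)
    (γ : ℕ → ℝ) (hγ1 : ∀ j, 1 ≤ γ j) (hmono : Monotone γ)
    (hasymp : Tendsto (fun j : ℕ => γ j / (a * (j : ℝ) ^ α)) atTop (nhds 1)) :
    ∃ C : ℝ, 0 < C ∧
      Tendsto (fun t : ℝ =>
          (({p : ℕ × ℕ | ((p.1 : ℝ) + 1 / 2) ^ (2 * r) + γ p.2 ≤ t}.ncard : ℝ)) /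
            (C * t ^ (1 / (2 * (r : ℝ)) + 1 / α)))
        atTop (nhds 1) := by
  have hrR : (0:ℝ) < 2 * (r:ℝ) := by positivity
  set p : ℝ := 1 / (2 * (r:ℝ)) with hpdef
  set q : ℝ := 1 / α with hqdef
  have hp : 0 < p := by positivity
  have hq : 0 < q := by positivity
  have hqα : q * α = 1 := by rw [hqdef]; field_simp
  set I : ℝ := ∫ u in (0:ℝ)..1, (max (1 - u ^ α) 0) ^ p with hIdef
  have hI : 0 < I := aux_Ipos α p hα hp
  have haq : 0 < a ^ q := Real.rpow_pos_of_pos ha q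
  set C : ℝ := I / a ^ q with hCdef
  have hC : 0 < C := by positivity
  refine ⟨C, hC, ?_⟩
  -- γ tends to infinity
  have hpow_top : Tendsto (fun j : ℕ => a * (j:ℝ) ^ α) atTop atTop := by
    apply Tendsto.const_mul_atTop ha
    exact (tendsto_rpow_atTop hα).comp tendsto_natCast_atTop_atTop
  have hγtop : Tendsto γ atTop atTop := by
    have h1 : Tendsto (fun j : ℕ => (γ j / (a * (j:ℝ) ^ α)) * (a * (j:ℝ) ^ α)) atTop atTop :=
      hasymp.pos_mul_atTop one_pos hpow_top
    apply h1.congr'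
    filter_upwards [eventually_ge_atTop 1] with j hj
    have hj0 : (0:ℝ) < (j:ℝ) := by exact_mod_cast Nat.lt_of_lt_of_le Nat.zero_lt_one hj
    have : a * (j:ℝ) ^ α ≠ 0 := by positivity
    field_simp
  -- the counting function machinery
  set K : ℝ → ℕ := fun s => ⌊s ^ p + 1/2⌋₊ with hKdef
  have hK : ∀ s : ℝ, 0 ≤ s → ∀ k : ℕ, (k < K s ↔ ((k:ℝ)+1/2)^(2*r) ≤ s) := by
    intro s hs k
    have hsp : (0:ℝ) ≤ s ^ p := Real.rpow_nonneg hs _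
    have hpow : (s ^ p) ^ (2*r) = s := by
      rw [← Real.rpow_natCast (s ^ p) (2*r), ← Real.rpow_mul hs]
      rw [hpdef]
      push_cast
      rw [one_div, inv_mul_cancel₀ hrR.ne', Real.rpow_one]
    have h2r : 2 * r ≠ 0 := by omega
    constructor
    · intro hk
      have h1 : (k:ℝ) + 1 ≤ s ^ p + 1/2 := by
        have := (Nat.le_floor_iff (by positivity)).mp hk
        push_cast at this
        linarith
      have h2 : (k:ℝ) + 1/2 ≤ s ^ p := by linarith
      calc ((k:ℝ)+1/2)^(2*r) ≤ (s ^ p)^(2*r) := by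
            apply pow_le_pow_left₀ (by positivity) h2
        _ = s := hpow
    · intro hk
      have h2 : (k:ℝ) + 1/2 ≤ s ^ p := by
        have := hpow ▸ hk
        exact le_of_pow_le_pow_left₀ h2r hsp this
      have h3 := Nat.le_floor (by push_cast; linarith : ((k+1:ℕ):ℝ) ≤ s ^ p + 1/2)
      show k < ⌊s ^ p + 1/2⌋₊
      omega
  have hKb : ∀ s : ℝ, 0 ≤ s → s ^ p - 1 ≤ (K s : ℝ) ∧ (K s : ℝ) ≤ s ^ p + 1 := by
    intro s hs
    have hsp : (0:ℝ) ≤ s ^ p := Real.rpow_nonneg hs _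
    constructor
    · have := Nat.lt_floor_add_one (s ^ p + 1/2)
      show s ^ p - 1 ≤ (⌊s ^ p + 1/2⌋₊ : ℝ)
      push_cast at this ⊢
      linarith
    · have := Nat.floor_le (by positivity : (0:ℝ) ≤ s ^ p + 1/2)
      show (⌊s ^ p + 1/2⌋₊ : ℝ) ≤ s ^ p + 1
      linarith
  set m : ℝ → ℕ := fun t => sInf {j | t < γ j} with hmdef
  have hmlt : ∀ t : ℝ, ∀ j : ℕ, j < m t ↔ γ j ≤ t := by
    intro t j
    have hne : {j | t < γ j}.Nonempty := by
      obtain ⟨j, hj⟩ := (hγtop.eventually_gt_atTop t).exists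
      exact ⟨j, hj⟩
    constructor
    · intro hj
      by_contra hc
      have h4 : m t ≤ j := Nat.sInf_le (by simp only [Set.mem_setOf_eq]; exact lt_of_not_ge hc)
      omega
    · intro hj
      by_contra hc
      have h5 := hmono (le_of_not_gt hc : m t ≤ j)
      have hm := Nat.sInf_mem hne
      simp only [Set.mem_setOf_eq] at hm
      have : t < γ j := lt_of_lt_of_le hm h5
      linarith
  have hcard : ∀ t : ℝ, ({pp : ℕ × ℕ | ((pp.1:ℝ)+1/2)^(2*r) + γ pp.2 ≤ t}.ncard : ℝ)
      = ∑ j ∈ Finset.range (m t), (K (t - γ j) : ℝ) := by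
    intro t
    set T : Finset (ℕ × ℕ) :=
      (Finset.range (m t)).biUnion
        (fun j => (Finset.range (K (t - γ j))).image (fun k => (k, j))) with hTdef
    have hset : {pp : ℕ × ℕ | ((pp.1:ℝ)+1/2)^(2*r) + γ pp.2 ≤ t} = ↑T := by
      ext ⟨k, j⟩
      simp only [Set.mem_setOf_eq, hTdef, Finset.coe_biUnion, Finset.mem_coe,
        Finset.mem_biUnion, Finset.mem_range, Finset.mem_image, Set.mem_iUnion]
      constructor
      · intro h
        have hpos : (0:ℝ) ≤ ((k:ℝ)+1/2)^(2*r) := by positivity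
        have hjt : γ j ≤ t := by linarith
        refine ⟨j, (hmlt t j).mpr hjt, k, ?_, rfl⟩
        exact (hK (t - γ j) (by linarith) k).mpr (by linarith)
      · rintro ⟨j', hj', k', hk', hEq⟩
        cases hEq
        have hjt : γ j ≤ t := (hmlt t j).mp hj'
        have := (hK (t - γ j) (by linarith) k).mp hk'
        linarith
    rw [hset, Set.ncard_coe_finset, hTdef, Finset.card_biUnion]
    · push_cast
      congr 1
      ext j
      rw [Finset.card_image_of_injective _ (fun k1 k2 h => by simpa [Prod.ext_iff] using h),
        Finset.card_range]
    · intro j1 _ j2 _ hne12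
      simp only [Finset.disjoint_left, Finset.mem_image, Finset.mem_range]
      rintro ⟨k', j'⟩ ⟨k1, hk1, h1⟩ ⟨k2, hk2, h2⟩
      rw [← h1] at h2
      simp only [Prod.ext_iff] at h2
      exact hne12 h2.2.symm
  -- main argument
  rw [Metric.tendsto_nhds]
  intro ε hε
  -- choose η
  have hcont1 : Tendsto (fun η : ℝ => (1-η) ^ (-q)) (nhds 0) (nhds 1) := by
    have h0 : ContinuousAt (fun x : ℝ => x ^ (-q)) 1 :=
      Real.continuousAt_rpow_const 1 (-q) (Or.inl one_ne_zero)
    have h1 : Tendsto (fun η : ℝ => 1 - η) (nhds 0) (nhds 1) := by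
      simpa using (tendsto_const_nhds (x := (1:ℝ)) (f := nhds (0:ℝ))).sub
        (tendsto_id (x := nhds (0:ℝ)))
    have h2 := h0.tendsto.comp h1
    simpa [Function.comp_def, Real.one_rpow] using h2
  have hcont2 : Tendsto (fun η : ℝ => (1+η) ^ (-q)) (nhds 0) (nhds 1) := by
    have h0 : ContinuousAt (fun x : ℝ => x ^ (-q)) 1 :=
      Real.continuousAt_rpow_const 1 (-q) (Or.inl one_ne_zero)
    have h1 : Tendsto (fun η : ℝ => 1 + η) (nhds 0) (nhds 1) := by
      simpa using (tendsto_const_nhds (x := (1:ℝ)) (f := nhds (0:ℝ))).add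
        (tendsto_id (x := nhds (0:ℝ)))
    have h2 := h0.tendsto.comp h1
    simpa [Function.comp_def, Real.one_rpow] using h2
  obtain ⟨η, hη0, hη1, hgu, hgl⟩ :
      ∃ η : ℝ, 0 < η ∧ η < 1 ∧ (1-η)^(-q) < 1 + ε/2 ∧ 1 - ε/2 < (1+η)^(-q) := by
    have e1 : ∀ᶠ η : ℝ in nhds 0, (1-η)^(-q) < 1 + ε/2 :=
      hcont1.eventually_lt_const (by linarith)
    have e2 : ∀ᶠ η : ℝ in nhds 0, 1 - ε/2 < (1+η)^(-q) :=
      hcont2.eventually_const_lt (by linarith)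
    have e3 : ∀ᶠ η : ℝ in nhds 0, η < 1 :=
      (tendsto_id (x := nhds (0:ℝ))).eventually_lt_const one_pos
    have e4 := ((e1.and (e2.and e3)).filter_mono (nhdsWithin_le_nhds (s := Set.Ioi (0:ℝ)))).and
      (eventually_mem_nhdsWithin (a := (0:ℝ)) (s := Set.Ioi 0))
    obtain ⟨η, ⟨h1', h2', h3'⟩, h4'⟩ := e4.exists
    exact ⟨η, h4', h3', h1', h2'⟩
  -- choose J
  have hJev : ∀ᶠ j : ℕ in atTop, |γ j / (a * (j:ℝ)^α) - 1| < η := by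
    have := Metric.tendsto_nhds.mp hasymp η hη0
    exact this.mono (fun j hj => by simpa [Real.dist_eq] using hj)
  obtain ⟨J₀, hJ₀⟩ := eventually_atTop.mp hJev
  set J : ℕ := max J₀ 1 with hJdef
  have hJγ : ∀ j : ℕ, J ≤ j → (1-η) * a * (j:ℝ)^α ≤ γ j ∧ γ j ≤ (1+η) * a * (j:ℝ)^α := by
    intro j hj
    have hj1 : (1:ℕ) ≤ j := le_trans (le_max_right _ _) hj
    have hjR : (0:ℝ) < (j:ℝ) := by exact_mod_cast hj1
    have hy : (0:ℝ) < a * (j:ℝ)^α := by positivity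
    have habs := hJ₀ j (le_trans (le_max_left _ _) hj)
    rw [abs_lt] at habs
    obtain ⟨hlo, hhi⟩ := habs
    constructor
    · have h6 : (1-η) < γ j / (a * (j:ℝ)^α) := by linarith
      have h7 := (lt_div_iff₀ hy).mp h6
      nlinarith [h7]
    · have h6 : γ j / (a * (j:ℝ)^α) < 1+η := by linarith
      have h7 := (div_lt_iff₀ hy).mp h6
      nlinarith [h7]
  set b : ℝ := (1 - η) * a with hbdef
  set b' : ℝ := (1 + η) * a with hb'def
  have h1η : (0:ℝ) < 1 - η := by linarith
  have h1η' : (0:ℝ) < 1 + η := by linarith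
  have hb : 0 < b := mul_pos h1η ha
  have hb' : 0 < b' := mul_pos h1η' ha
  -- error function E
  set E : ℝ → ℝ :=
    fun t => (((J:ℝ)+1) * t ^ p + ((J:ℝ) + (t/b) ^ q + 1)) / (C * t ^ (p+q)) with hEdef
  have hE0 : Tendsto E atTop (nhds 0) := by
    have h1 : Tendsto (fun t : ℝ => t ^ (-q)) atTop (nhds 0) := tendsto_rpow_neg_atTop hq
    have h2 : Tendsto (fun t : ℝ => t ^ (-(p+q))) atTop (nhds 0) :=
      tendsto_rpow_neg_atTop (by positivity)
    have h3 : Tendsto (fun t : ℝ => t ^ (-p)) atTop (nhds 0) := tendsto_rpow_neg_atTop hp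
    have h4 : Tendsto (fun t : ℝ => (((J:ℝ)+1)/C) * t^(-q) + (((J:ℝ)+1)/C) * t^(-(p+q))
          + (1/(C*b^q)) * t^(-p)) atTop
        (nhds ((((J:ℝ)+1)/C) * 0 + (((J:ℝ)+1)/C) * 0 + (1/(C*b^q)) * 0)) :=
      ((h1.const_mul _).add (h2.const_mul _)).add (h3.const_mul _)
    simp only [mul_zero, add_zero] at h4
    apply h4.congr'
    filter_upwards [eventually_gt_atTop (0:ℝ)] with t ht
    have hpqt : (0:ℝ) < t^(p+q) := Real.rpow_pos_of_pos ht _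
    have e1 : t^(-q) = t^p / t^(p+q) := by
      rw [← Real.rpow_sub ht]; congr 1; ring
    have e2 : t^(-(p+q)) = 1 / t^(p+q) := by rw [Real.rpow_neg ht.le, one_div]
    have e3 : (t/b)^q = t^q / b^q := Real.div_rpow ht.le hb.le q
    have e4 : t^(-p) = t^q / t^(p+q) := by
      rw [← Real.rpow_sub ht]; congr 1; ring
    rw [hEdef]
    show _ = (((J:ℝ)+1) * t ^ p + ((J:ℝ) + (t/b) ^ q + 1)) / (C * t ^ (p+q))
    rw [e1, e2, e3, e4]
    have hbq : (0:ℝ) < b^q := Real.rpow_pos_of_pos hb _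
    field_simp
    ring
  have hev2 : ∀ᶠ t : ℝ in atTop, ((J:ℝ)+1) ≤ (t/b')^q := by
    have h1 : Tendsto (fun t : ℝ => (t/b')^q) atTop atTop :=
      (tendsto_rpow_atTop hq).comp (tendsto_id.atTop_div_const hb')
    exact h1.eventually_ge_atTop _
  have hev3 : ∀ᶠ t : ℝ in atTop, |E t| < ε/2 := by
    have := Metric.tendsto_nhds.mp hE0 (ε/2) (by linarith)
    exact this.mono (fun t ht => by simpa [Real.dist_eq] using ht)
  filter_upwards [eventually_ge_atTop (1:ℝ), hev2, hev3] with t ht1 ht2 ht3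
  have ht0 : (0:ℝ) < t := lt_of_lt_of_le one_pos ht1
  rw [hcard t]
  set M : ℕ := m t with hMdef
  have hsub : ∀ j : ℕ, j < M → 0 ≤ t - γ j := by
    intro j hj
    have := (hmlt t j).mp hj
    linarith
  set S : ℝ := ∑ j ∈ Finset.range M, (t - γ j) ^ p with hSdef
  have hNup : (∑ j ∈ Finset.range M, (K (t - γ j) : ℝ)) ≤ S + M := by
    have hterm : ∀ j ∈ Finset.range M, (K (t - γ j):ℝ) ≤ (t - γ j)^p + 1 := fun j hj =>
      (hKb _ (hsub j (Finset.mem_range.mp hj))).2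
    calc (∑ j ∈ Finset.range M, (K (t - γ j) : ℝ))
        ≤ ∑ j ∈ Finset.range M, ((t - γ j)^p + 1) := Finset.sum_le_sum hterm
      _ = S + M := by
          rw [Finset.sum_add_distrib, Finset.sum_const, Finset.card_range, nsmul_eq_mul, mul_one]
  have hNlo : S - M ≤ ∑ j ∈ Finset.range M, (K (t - γ j) : ℝ) := by
    have hterm : ∀ j ∈ Finset.range M, (t - γ j)^p - 1 ≤ (K (t - γ j):ℝ) := fun j hj =>
      (hKb _ (hsub j (Finset.mem_range.mp hj))).1
    calc S - M
        = ∑ j ∈ Finset.range M, ((t - γ j)^p - 1) := by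
          rw [Finset.sum_sub_distrib, Finset.sum_const, Finset.card_range, nsmul_eq_mul, mul_one]
      _ ≤ ∑ j ∈ Finset.range M, (K (t - γ j) : ℝ) := Finset.sum_le_sum hterm
  have htp0 : (0:ℝ) ≤ t ^ p := Real.rpow_nonneg ht0.le _
  have ite_bound : (∑ j ∈ Finset.range M, (if j < J then t^p else 0)) ≤ (J:ℝ) * t^p := by
    have h1 : (∑ j ∈ Finset.range M, (if j < J then t^p else 0))
        = ∑ j ∈ (Finset.range M).filter (fun j => j < J), t^p := (Finset.sum_filter _ _).symm
    rw [h1, Finset.sum_const, nsmul_eq_mul]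
    have h2 : ((Finset.range M).filter (fun j => j < J)).card ≤ J := by
      have hsub2 : (Finset.range M).filter (fun j => j < J) ⊆ Finset.range J := by
        intro x hx
        simp only [Finset.mem_filter, Finset.mem_range] at hx ⊢
        exact hx.2
      simpa using Finset.card_le_card hsub2
    exact mul_le_mul_of_nonneg_right (by exact_mod_cast h2) htp0
  -- upper bound for S
  have hSup : S ≤ (t^p + (t/b)^q * t^p * I) + (J:ℝ) * t^p := by
    have hterm : ∀ j ∈ Finset.range M,
        (t - γ j)^p ≤ (max (t - b*(j:ℝ)^α) 0)^p + (if j < J then t^p else 0) := by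
      intro j hj
      have h0 := hsub j (Finset.mem_range.mp hj)
      by_cases hcase : j < J
      · simp only [hcase, if_true]
        have hle : (t - γ j)^p ≤ t^p :=
          Real.rpow_le_rpow h0 (by have := hγ1 j; linarith) hp.le
        have hnn : 0 ≤ (max (t - b*(j:ℝ)^α) 0)^p := Real.rpow_nonneg (le_max_right _ _) _
        linarith
      · simp only [hcase, if_false, add_zero]
        push_neg at hcase
        have hγb := (hJγ j hcase).1
        apply Real.rpow_le_rpow h0 _ hp.le
        have h8 : t - γ j ≤ t - b * (j:ℝ)^α := by
          have : b * (j:ℝ)^α ≤ γ j := by rw [hbdef]; exact hγb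
          linarith
        exact le_trans h8 (le_max_left _ _)
    have hA := aux_sum_upper α p b t hα hp hb ht0 M
    rw [← hqdef, ← hIdef] at hA
    calc S ≤ ∑ j ∈ Finset.range M,
          ((max (t - b*(j:ℝ)^α) 0)^p + (if j < J then t^p else 0)) := Finset.sum_le_sum hterm
      _ = (∑ j ∈ Finset.range M, (max (t - b*(j:ℝ)^α) 0)^p)
          + ∑ j ∈ Finset.range M, (if j < J then t^p else 0) := Finset.sum_add_distrib
      _ ≤ (t^p + (t/b)^q * t^p * I) + (J:ℝ)*t^p := add_le_add hA ite_bound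
  -- lower bound: m is large
  have hqαid : ∀ x : ℝ, 0 < x → ((x)^q)^α = x := by
    intro x hx
    rw [← Real.rpow_mul hx.le, hqα, Real.rpow_one]
  have hmL : (t/b')^q ≤ (M:ℝ) := by
    set j0 : ℕ := ⌊(t/b')^q⌋₊ with hj0def
    have hY'0 : (0:ℝ) ≤ (t/b')^q := Real.rpow_nonneg (by positivity) _
    have hJj0 : J + 1 ≤ j0 := by
      apply Nat.le_floor
      push_cast
      exact ht2
    have hj0Y : (j0:ℝ) ≤ (t/b')^q := Nat.floor_le hY'0
    have hγj0 : γ j0 ≤ t := by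
      have h7 := (hJγ j0 (by omega)).2
      have h8 : (j0:ℝ)^α ≤ ((t/b')^q)^α :=
        Real.rpow_le_rpow (Nat.cast_nonneg _) hj0Y hα.le
      rw [hqαid (t/b') (by positivity)] at h8
      have h10 : b' * (j0:ℝ)^α ≤ t := by
        have h9 := mul_le_mul_of_nonneg_left h8 hb'.le
        calc b' * (j0:ℝ)^α ≤ b' * (t/b') := h9
          _ = t := by field_simp
      calc γ j0 ≤ (1+η) * a * (j0:ℝ)^α := h7
        _ = b' * (j0:ℝ)^α := by rw [hb'def]
        _ ≤ t := h10
    have hj0M : j0 < M := (hmlt t j0).mpr hγj0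
    have h11 : (t/b')^q < (j0:ℝ) + 1 := Nat.lt_floor_add_one _
    have h12 : (j0:ℝ) + 1 ≤ (M:ℝ) := by exact_mod_cast hj0M
    linarith
  -- upper bound on m
  have hmU : (M:ℝ) ≤ (J:ℝ) + (t/b)^q + 1 := by
    have hYb0 : (0:ℝ) ≤ (t/b)^q := Real.rpow_nonneg (by positivity) _
    rcases Nat.eq_zero_or_pos M with hM0 | hMpos
    · rw [hM0]
      push_cast
      positivity
    · set n : ℕ := M - 1 with hndef
      have hnM : n < M := by omega
      have hγn : γ n ≤ t := (hmlt t n).mp hnM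
      by_cases hcase : n < J
      · have h13 : (M:ℝ) ≤ (J:ℝ) := by exact_mod_cast (by omega : M ≤ J)
        linarith
      · push_neg at hcase
        have h7 := (hJγ n hcase).1
        have h8 : b * (n:ℝ)^α ≤ t := by
          calc b * (n:ℝ)^α = (1-η) * a * (n:ℝ)^α := by rw [hbdef]
            _ ≤ γ n := h7
            _ ≤ t := hγn
        have h9 : (n:ℝ) ≤ (t/b)^q := by
          by_contra hcon
          push_neg at hcon
          have h10 : ((t/b)^q)^α < (n:ℝ)^α :=
            Real.rpow_lt_rpow (Real.rpow_nonneg (by positivity) _) hcon hα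
          rw [hqαid (t/b) (by positivity)] at h10
          have h11 := (div_lt_iff₀ hb).mp h10
          nlinarith
        have h14 : (M:ℝ) = (n:ℝ) + 1 := by
          have : M = n + 1 := by omega
          rw [this]
          push_cast
          ring
        have h15 : (0:ℝ) ≤ (J:ℝ) := Nat.cast_nonneg _
        linarith
  -- lower bound for S
  have hSlow : (t/b')^q * t^p * I - (J:ℝ)*t^p ≤ S := by
    have hterm : ∀ j ∈ Finset.range M,
        (max (t - b'*(j:ℝ)^α) 0)^p - (if j < J then t^p else 0) ≤ (t - γ j)^p := by
      intro j hj
      have h0 := hsub j (Finset.mem_range.mp hj)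
      have hjα0 : (0:ℝ) ≤ (j:ℝ)^α := Real.rpow_nonneg (Nat.cast_nonneg _) _
      by_cases hcase : j < J
      · simp only [hcase, if_true]
        have hle : (max (t - b'*(j:ℝ)^α) 0)^p ≤ t^p := by
          apply Real.rpow_le_rpow (le_max_right _ _) _ hp.le
          apply max_le _ ht0.le
          nlinarith
        have hnn : 0 ≤ (t - γ j)^p := Real.rpow_nonneg h0 _
        linarith
      · simp only [hcase, if_false, sub_zero]
        push_neg at hcase
        have hγb := (hJγ j hcase).2
        apply Real.rpow_le_rpow (le_max_right _ _) _ hp.le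
        apply max_le _ h0
        have : γ j ≤ b' * (j:ℝ)^α := by rw [hb'def]; exact hγb
        linarith
    have hA := aux_sum_lower α p b' t hα hp hb' ht0 M (by rw [← hqdef]; exact hmL)
    rw [← hqdef, ← hIdef] at hA
    have h16 : (∑ j ∈ Finset.range M, (max (t - b'*(j:ℝ)^α) 0)^p)
        - (∑ j ∈ Finset.range M, (if j < J then t^p else 0)) ≤ S := by
      rw [← Finset.sum_sub_distrib]
      exact Finset.sum_le_sum hterm
    linarith
  -- key identities
  set D : ℝ := C * t^(p+q) with hDdef
  have hD : 0 < D := mul_pos hC (Real.rpow_pos_of_pos ht0 _)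
  have idU : (t/b)^q * t^p * I = (1-η)^(-q) * D := by
    rw [hDdef, hCdef, Real.div_rpow ht0.le hb.le, hbdef,
      Real.mul_rpow h1η.le ha.le, Real.rpow_add ht0, Real.rpow_neg h1η.le]
    have h1 : ((1:ℝ)-η)^q ≠ 0 := ne_of_gt (Real.rpow_pos_of_pos h1η _)
    field_simp
  have idL : (t/b')^q * t^p * I = (1+η)^(-q) * D := by
    rw [hDdef, hCdef, Real.div_rpow ht0.le hb'.le, hb'def,
      Real.mul_rpow h1η'.le ha.le, Real.rpow_add ht0, Real.rpow_neg h1η'.le]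
    have h1 : ((1:ℝ)+η)^q ≠ 0 := ne_of_gt (Real.rpow_pos_of_pos h1η' _)
    field_simp
  have hEt : E t * D = ((J:ℝ)+1) * t ^ p + ((J:ℝ) + (t/b) ^ q + 1) := by
    rw [hEdef, hDdef]
    exact div_mul_cancel₀ _ (by positivity)
  -- combine
  have hNf : (∑ j ∈ Finset.range M, (K (t - γ j) : ℝ)) ≤ (1-η)^(-q) * D + E t * D := by
    rw [hEt]
    have h17 := idU
    linarith
  have hNg : (1+η)^(-q) * D - E t * D ≤ ∑ j ∈ Finset.range M, (K (t - γ j) : ℝ) := by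
    rw [hEt]
    have h17 := idL
    linarith
  have hq1 : (∑ j ∈ Finset.range M, (K (t - γ j) : ℝ)) / D ≤ (1-η)^(-q) + E t := by
    rw [div_le_iff₀ hD]
    nlinarith [hNf]
  have hq2 : (1+η)^(-q) - E t ≤ (∑ j ∈ Finset.range M, (K (t - γ j) : ℝ)) / D := by
    rw [le_div_iff₀ hD]
    nlinarith [hNg]
  have hEt' : E t < ε/2 := lt_of_le_of_lt (le_abs_self _) ht3
  have hEt'' : -(ε/2) < E t := by
    have := neg_abs_le (E t)
    linarith
  rw [Real.dist_eq, abs_sub_lt_iff]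
  constructor
  · linarith
  · linarith
end

section
/- Let (μ_n) be nondecreasing with μ_n ~ d·n^β (d > 0, β > 1). Then there exists a constant c > 0 and a subsequence (n_p) of positive integers with n_p → ∞ such that μ_q − μ_{n_p} ≥ c·(q^β − n_p^β) for all q ≥ n_p + 1 and all p. -/
open Filter

theorem stmt_11 (μ : ℕ → ℝ) (hmono : Monotone μ) (d β : ℝ) (hd : 0 < d) (hβ : 1 < β)
    (hasymp : Tendsto (fun n : ℕ => μ n / (d * (n : ℝ) ^ β)) atTop (nhds 1)) :
    ∃ c : ℝ, 0 < c ∧ ∃ np : ℕ → ℕ, StrictMono np ∧ (∀ p, 1 ≤ np p) ∧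
      ∀ p q : ℕ, np p + 1 ≤ q →
        c * ((q : ℝ) ^ β - (np p : ℝ) ^ β) ≤ μ q - μ (np p) := by
  classical
  set a : ℕ → ℝ := fun n => μ n - d / 2 * (n : ℝ) ^ β with ha_def
  -- d * n^β → ∞
  have hg : Tendsto (fun n : ℕ => d * (n : ℝ) ^ β) atTop atTop :=
    ((tendsto_rpow_atTop (by linarith : (0:ℝ) < β)).comp
      tendsto_natCast_atTop_atTop).const_mul_atTop hd
  have hlim : Tendsto (fun n : ℕ => μ n / (d * (n : ℝ) ^ β) - 1/2) atTop (nhds (1/2)) := by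
    have h := hasymp.sub_const (1/2)
    rw [show (1:ℝ) - 1/2 = 1/2 by norm_num] at h
    exact h
  have ha : Tendsto a atTop atTop := by
    have h1 : Tendsto (fun n : ℕ => (μ n / (d * (n:ℝ)^β) - 1/2) * (d * (n:ℝ)^β))
        atTop atTop := hlim.pos_mul_atTop (by norm_num) hg
    refine h1.congr' ?_
    filter_upwards [eventually_ge_atTop 1] with n hn
    have hnpos : (0:ℝ) < (n:ℝ) := by exact_mod_cast Nat.lt_of_lt_of_le Nat.zero_lt_one hn
    have hD : (0:ℝ) < d * (n:ℝ)^β := mul_pos hd (Real.rpow_pos_of_pos hnpos β)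
    have hD' : d * (n:ℝ)^β ≠ 0 := ne_of_gt hD
    simp only [ha_def]
    field_simp
  -- valley points
  have valley : ∀ m : ℕ, ∃ n, m ≤ n ∧ ∀ q, n ≤ q → a n ≤ a q := by
    intro m
    obtain ⟨N, hN⟩ := eventually_atTop.mp (tendsto_atTop.mp ha (a m + 1))
    set N' := max N m with hN'
    have hS : (Finset.Icc m N').Nonempty :=
      ⟨m, Finset.mem_Icc.mpr ⟨le_refl m, le_max_right _ _⟩⟩
    obtain ⟨n, hnS, hmin⟩ := Finset.exists_min_image (Finset.Icc m N') a hS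
    obtain ⟨hmn, hnN⟩ := Finset.mem_Icc.mp hnS
    refine ⟨n, hmn, fun q hq => ?_⟩
    by_cases hqN : q ≤ N'
    · exact hmin q (Finset.mem_Icc.mpr ⟨le_trans hmn hq, hqN⟩)
    · have h1 : a m + 1 ≤ a q :=
        hN q (le_trans (le_max_left N m) (le_of_not_ge hqN))
      have h2 : a n ≤ a m := hmin m (Finset.mem_Icc.mpr ⟨le_refl m, le_max_right N m⟩)
      linarith
  choose pick hpick1 hpick2 using valley
  let np : ℕ → ℕ := fun p => Nat.rec (pick 1) (fun _ prev => pick (prev + 1)) p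
  have hnpsucc : ∀ p, np (p+1) = pick (np p + 1) := fun p => rfl
  have hsm : StrictMono np := strictMono_nat_of_lt_succ (fun p => by
    rw [hnpsucc]
    exact lt_of_lt_of_le (Nat.lt_succ_self _) (hpick1 _))
  have hge1 : ∀ p, 1 ≤ np p := by
    intro p
    induction p with
    | zero => exact hpick1 1
    | succ p ih =>
      rw [hnpsucc]
      exact le_trans (le_trans ih (Nat.le_succ _)) (hpick1 _)
  have hvalley : ∀ p q, np p ≤ q → a (np p) ≤ a q := by
    intro p
    cases p with
    | zero => exact hpick2 1
    | succ p => exact hpick2 _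
  refine ⟨d/2, by linarith, np, hsm, hge1, fun p q hq => ?_⟩
  have h := hvalley p q (le_trans (Nat.le_succ _) hq)
  simp only [ha_def] at h
  rw [mul_sub]
  linarith
end
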